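/- Let J ≥ 2 be an integer, P > 0 and λ ≥ 0 real numbers, and M a J×J real symmetric positive semidefinite matrix with M_{jj} = P for all j. Set S = Σ_{j,k=1}^J M_{jk} and β = S/(J·P). Then 0 ≤ β ≤ J, and h(λ, M) ≥ ((λ−1)/2)·log(1 + J·P·β) − (J·λ/(2(J−1)))·log(1 + P·β·(J−β)). -/

import Mathlib

open Finset

/-- The function `h(λ, K)` from the dependence-balance bound:
`h(λ, K) = ((λ−1)/2)·log(1 + Σ_{j,k} K_{jk})
  − (λ/(2(J−1)))·Σ_j log(1 + Σ_{ℓ,k} K_{ℓk} − (Σ_k K_{jk})²/K_{jj})`. -/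
noncomputable def hFun (J : ℕ) (lam : ℝ) (K : Matrix (Fin J) (Fin J) ℝ) : ℝ :=
  ((lam - 1) / 2) * Real.log (1 + ∑ l : Fin J, ∑ k : Fin J, K l k)
    - (lam / (2 * ((J : ℝ) - 1))) *
      ∑ j : Fin J, Real.log (1 + (∑ l : Fin J, ∑ k : Fin J, K l k)
        - (∑ k : Fin J, K j k) ^ 2 / K j j)

/-- Let `J ≥ 2`, `P > 0`, `λ ≥ 0`, and `M` a `J×J` real symmetric positive
semidefinite matrix with all diagonal entries `P`. With `S = Σ_{j,k} M_{jk}` and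
`β = S/(J·P)`, we have `0 ≤ β ≤ J` and
`h(λ, M) ≥ ((λ−1)/2)·log(1 + J·P·β) − (J·λ/(2(J−1)))·log(1 + P·β·(J−β))`. -/
theorem stmt_7 (J : ℕ) (hJ : 2 ≤ J) (P : ℝ) (hP : 0 < P) (lam : ℝ) (hlam : 0 ≤ lam)
    (M : Matrix (Fin J) (Fin J) ℝ) (hM : M.IsSymm) (hpsd : M.PosSemidef)
    (hdiag : ∀ j : Fin J, M j j = P) :
    0 ≤ (∑ l : Fin J, ∑ k : Fin J, M l k) / ((J : ℝ) * P) ∧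
    (∑ l : Fin J, ∑ k : Fin J, M l k) / ((J : ℝ) * P) ≤ (J : ℝ) ∧
    hFun J lam M ≥
      ((lam - 1) / 2) *
          Real.log (1 + (J : ℝ) * P * ((∑ l : Fin J, ∑ k : Fin J, M l k) / ((J : ℝ) * P)))
        - ((J : ℝ) * lam / (2 * ((J : ℝ) - 1))) *
          Real.log (1 + P * ((∑ l : Fin J, ∑ k : Fin J, M l k) / ((J : ℝ) * P)) *
            ((J : ℝ) - (∑ l : Fin J, ∑ k : Fin J, M l k) / ((J : ℝ) * P))) := by
  have hJR : (2:ℝ) ≤ (J:ℝ) := by exact_mod_cast hJ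
  have hJ0 : (0:ℝ) < (J:ℝ) := by linarith
  have hJne : (J:ℝ) ≠ 0 := ne_of_gt hJ0
  have hPne : P ≠ 0 := ne_of_gt hP
  set S : ℝ := ∑ l : Fin J, ∑ k : Fin J, M l k with hSdef
  set r : Fin J → ℝ := fun j => ∑ k : Fin J, M j k with hrdef
  have hrS : ∑ j : Fin J, r j = S := rfl
  have hS0 : 0 ≤ S := by
    have h := hpsd.dotProduct_mulVec_nonneg (fun _ => (1:ℝ))
    simpa [dotProduct, Matrix.mulVec, hSdef] using h
  have hcol : ∀ j : Fin J, ∑ l : Fin J, M l j = r j := by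
    intro j
    exact Finset.sum_congr rfl fun l _ => (hM.apply l j).symm
  -- Cauchy–Schwarz: (row sum)² ≤ P·S
  have hrsq : ∀ j : Fin J, r j ^ 2 ≤ P * S := by
    intro j
    have hq : ∀ t : ℝ, 0 ≤ S * (t * t) + (2 * r j) * t + P := by
      intro t
      have h := hpsd.dotProduct_mulVec_nonneg (fun k => (if k = j then (1:ℝ) else 0) + t)
      have hv : ∀ l, (M.mulVec (fun k => (if k = j then (1:ℝ) else 0) + t)) l
          = M l j + t * r l := by
        intro l
        simp [Matrix.mulVec, dotProduct, mul_add, Finset.sum_add_distrib,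
          mul_ite, mul_one, mul_zero, Finset.sum_ite_eq', Finset.mul_sum, hrdef,
          mul_comm]
      have e : dotProduct (star fun k => (if k = j then (1:ℝ) else 0) + t)
          (M.mulVec (fun k => (if k = j then (1:ℝ) else 0) + t))
          = S * (t * t) + (2 * r j) * t + P := by
        simp only [dotProduct, Pi.star_apply, star_trivial, hv]
        simp only [add_mul, ite_mul, one_mul, zero_mul, Finset.sum_add_distrib,
          Finset.sum_ite_eq', Finset.mem_univ, if_true]
        rw [hdiag j]
        have h2 : ∑ l : Fin J, t * (M l j + t * r l) = t * r j + t * t * S := by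
          simp only [mul_add, Finset.sum_add_distrib, ← Finset.mul_sum, hcol j, hrS]
          ring
        rw [h2]; ring
      rw [e] at h; exact h
    have hd := discrim_le_zero hq
    rw [discrim] at hd
    nlinarith [hd]
  -- S ≤ J²·P
  have hsum2 : S ^ 2 ≤ (J:ℝ) * ∑ j : Fin J, r j ^ 2 := by
    have h := sq_sum_le_card_mul_sum_sq (s := (Finset.univ : Finset (Fin J))) (f := r)
    simpa [hrS, Finset.card_univ] using h
  have hsumr2 : ∑ j : Fin J, r j ^ 2 ≤ (J:ℝ) * (P * S) := by
    calc ∑ j : Fin J, r j ^ 2 ≤ ∑ _j : Fin J, P * S := Finset.sum_le_sum fun j _ => hrsq j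
    _ = (J:ℝ) * (P * S) := by simp [Finset.card_univ, mul_comm]
  have hβ0 : 0 ≤ S / ((J:ℝ) * P) := div_nonneg hS0 (by positivity)
  have hβJ : S / ((J:ℝ) * P) ≤ (J:ℝ) := by
    rw [div_le_iff₀ (by positivity)]
    rcases eq_or_lt_of_le hS0 with h | h
    · nlinarith [mul_pos hJ0 (mul_pos hJ0 hP)]
    · nlinarith [hsum2, hsumr2]
  -- Jensen
  set x : Fin J → ℝ := fun j => 1 + S - r j ^ 2 / P with hxdef
  have hx1 : ∀ j, 1 ≤ x j := by
    intro j
    have h : r j ^ 2 / P ≤ S := by rw [div_le_iff₀ hP]; nlinarith [hrsq j]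
    simp only [hxdef]; linarith
  have hJsum : ∑ _j : Fin J, ((J:ℝ)⁻¹) = 1 := by
    rw [Finset.sum_const, Finset.card_univ, Fintype.card_fin, nsmul_eq_mul,
      mul_inv_cancel₀ hJne]
  have hjensen : ∑ j : Fin J, (J:ℝ)⁻¹ • Real.log (x j)
      ≤ Real.log (∑ j : Fin J, (J:ℝ)⁻¹ • x j) :=
    strictConcaveOn_log_Ioi.concaveOn.le_map_sum (fun i _ => by positivity) hJsum
      (fun i _ => Set.mem_Ioi.mpr (by linarith [hx1 i]))
  have hsumx : ∑ j : Fin J, x j = (J:ℝ) * (1 + S) - (∑ j : Fin J, r j ^ 2) / P := by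
    simp only [hxdef]
    rw [Finset.sum_sub_distrib, Finset.sum_const, Finset.card_univ, Fintype.card_fin,
      ← Finset.sum_div]
    ring_nf
  set A : ℝ := 1 + S - S ^ 2 / ((J:ℝ) ^ 2 * P) with hAdef
  have havg_eq : ∑ j : Fin J, (J:ℝ)⁻¹ • x j
      = 1 + S - (∑ j : Fin J, r j ^ 2) / ((J:ℝ) * P) := by
    simp only [smul_eq_mul, ← Finset.mul_sum, hsumx]
    field_simp
  have havgle : ∑ j : Fin J, (J:ℝ)⁻¹ • x j ≤ A := by
    rw [havg_eq, hAdef]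
    have h : S ^ 2 / ((J:ℝ) ^ 2 * P) ≤ (∑ j : Fin J, r j ^ 2) / ((J:ℝ) * P) := by
      rw [div_le_div_iff₀ (by positivity) (by positivity)]
      nlinarith [mul_le_mul_of_nonneg_right hsum2 (le_of_lt (mul_pos hJ0 hP))]
    linarith
  have havg1 : 1 ≤ ∑ j : Fin J, (J:ℝ)⁻¹ • x j := by
    calc (1:ℝ) = ∑ _j : Fin J, (J:ℝ)⁻¹ := hJsum.symm
    _ ≤ ∑ j : Fin J, (J:ℝ)⁻¹ • x j := by
        refine Finset.sum_le_sum fun i _ => ?_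
        have := hx1 i
        have hJi : (0:ℝ) ≤ (J:ℝ)⁻¹ := by positivity
        simpa using mul_le_mul_of_nonneg_left (hx1 i) hJi
  have hlogA : Real.log (∑ j : Fin J, (J:ℝ)⁻¹ • x j) ≤ Real.log A :=
    Real.log_le_log (by linarith) havgle
  have hkey : ∑ j : Fin J, Real.log (x j) ≤ (J:ℝ) * Real.log A := by
    have h := hjensen.trans hlogA
    simp only [smul_eq_mul, ← Finset.mul_sum] at h
    rw [inv_mul_le_iff₀ hJ0] at h
    linarith [h]
  -- identities
  have hid1 : (J:ℝ) * P * (S / ((J:ℝ) * P)) = S := by field_simp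
  have hid2 : 1 + P * (S / ((J:ℝ) * P)) * ((J:ℝ) - S / ((J:ℝ) * P)) = A := by
    rw [hAdef]; field_simp; ring
  refine ⟨hβ0, hβJ, ?_⟩
  unfold hFun
  rw [hid1, hid2]
  have hsumlog : ∑ j : Fin J, Real.log (1 + S - (∑ k : Fin J, M j k) ^ 2 / M j j)
      = ∑ j : Fin J, Real.log (x j) :=
    Finset.sum_congr rfl fun j _ => by rw [hdiag j]
  rw [hsumlog]
  have hC : 0 ≤ lam / (2 * ((J:ℝ) - 1)) := div_nonneg hlam (by linarith)
  have hmul := mul_le_mul_of_nonneg_left hkey hC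
  have heq : lam / (2 * ((J:ℝ) - 1)) * ((J:ℝ) * Real.log A)
      = (J:ℝ) * lam / (2 * ((J:ℝ) - 1)) * Real.log A := by ring
  rw [heq] at hmul
  linarith [hmul]
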